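/- arXiv:1804.11167 — 4 statements merged into one kernel-verified Lean document; each statement's English description precedes it below -/
import Mathlib

section
/- Let K be an ω-Calderón–Zygmund kernel on ℝ^d with ω(t) → 0 as t → 0, and suppose K is uniformly non-degenerate: there is c0 > 0 such that for every y ∈ ℝ^d and r > 0 there exists x with |x − y| ≥ r and |K(x,y)| ≥ 1/(c0 r^d). Then there exist constants 0 < c ≤ C (depending only on d, c_K, c0) and a function ε : [3,∞) → [0,∞) with ε(A) → 0 as A → ∞ (depending in addition on ω) such that for every A ≥ 3 and every ball B = B(y0,r) there is a point x0 with A·r ≤ |x0 − y0| ≤ C·A·r and c·(A r)^(−d) ≤ |K(x0,y0)| ≤ C·(A r)^(−d), and, setting B̃ := B(x0,r), for all y1 ∈ B and x1 ∈ B̃ one has ∫_B |K(x1,y) − K(x0,y0)| dy + ∫_{B̃} |K(x,y1) − K(x0,y0)| dx ≤ ε(A)·A^(−d). -/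
/-!
Take `x₀` from non-degeneracy at scale `A r`. Comparing the lower bound `|K(x₀,y₀)| ≥ (c₀(Ar)^d)⁻¹`
with the size bound `c_K |x₀ - y₀|^{-d}` gives `c_K c₀ ≥ 1` and `|x₀ - y₀| ≤ c_K c₀ A r`.
For `x ∈ B̃`, `y ∈ B` the points stay at distance `≥ (A - 2) r` apart, so passing from
`K(x,y)` to `K(x,y₀)` and then to `K(x₀,y₀)` costs two applications of the smoothness
estimate, each at most `ω(1/(A-2)) ((A-2) r)^{-d}`. Integrating this pointwise bound over a ball
of volume `|B(0,1)| r^d` gives `ε(A) A^{-d}` with `ε(A) ≈ ω(1/(A-2)) → 0`.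
-/

open MeasureTheory Metric Filter

lemma one_div_pow_mul_le_div_pow {ω : ℝ → ℝ} {d : ℕ} (hω : MonotoneOn ω (Set.Ico 0 1))
    (hω0 : ∀ t ∈ Set.Ico (0 : ℝ) 1, 0 ≤ ω t) {s r ρ D : ℝ} (hs : 0 ≤ s) (hsr : s ≤ r)
    (hr : 0 < r) (hrρ : r < ρ) (hρD : ρ ≤ D) :
    1 / D ^ d * ω (s / D) ≤ ω (r / ρ) / ρ ^ d := by
  have hρ : 0 < ρ := hr.trans hrρ
  have hD : 0 < D := hρ.trans_le hρD
  have hsD : s / D ∈ Set.Ico (0 : ℝ) 1 :=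
    ⟨by positivity, (div_le_div₀ hr.le hsr hρ hρD).trans_lt ((div_lt_one hρ).2 hrρ)⟩
  have hrρ1 : r / ρ ∈ Set.Ico (0 : ℝ) 1 := ⟨by positivity, (div_lt_one hρ).2 hrρ⟩
  calc 1 / D ^ d * ω (s / D) ≤ 1 / ρ ^ d * ω (r / ρ) := by
        gcongr
        · exact hω0 _ hsD
        · exact hω hsD hrρ1 (div_le_div₀ hr.le hsr hρ hρD)
    _ = ω (r / ρ) / ρ ^ d := by ring

section Kernel

variable {X F : Type*} [MetricSpace X] [NormedAddCommGroup F] {d : ℕ} {K : X → X → F}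
  {cK c0 : ℝ}

lemma sub_lt_dist_of_mem_ball {x x0 y y0 : X} {r : ℝ} (hx : x ∈ ball x0 r)
    (hy : y ∈ ball y0 r) : dist x0 y0 - 2 * r < dist x y := by
  rw [mem_ball] at hx hy
  linarith [dist_triangle4 x0 x y y0, dist_comm x0 x]

lemma norm_le_div_pow_of_le_dist (hK_size : ∀ x y : X, x ≠ y → ‖K x y‖ ≤ cK / dist x y ^ d)
    (hcK : 0 ≤ cK) {x y : X} {r : ℝ} (hr : 0 < r) (hxy : r ≤ dist x y) :
    ‖K x y‖ ≤ cK / r ^ d :=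
  (hK_size x y (dist_pos.1 (hr.trans_le hxy))).trans (by gcongr)

lemma one_le_mul_of_size_of_nondeg [Nonempty X]
    (hK_size : ∀ x y : X, x ≠ y → ‖K x y‖ ≤ cK / dist x y ^ d) (hc0 : 0 < c0)
    (hK_nondeg : ∀ (y : X) (r : ℝ), 0 < r → ∃ x : X, r ≤ dist x y ∧ 1 / (c0 * r ^ d) ≤ ‖K x y‖) :
    1 ≤ cK * c0 := by
  obtain ⟨x, hxy, hK⟩ := hK_nondeg (Classical.arbitrary X) 1 one_pos
  have hlow : 1 / c0 ≤ cK / dist x (Classical.arbitrary X) ^ d := by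
    simpa using hK.trans (hK_size _ _ (dist_pos.1 (one_pos.trans_le hxy)))
  have hcK : 0 ≤ cK := by
    have := (one_div_pos.2 hc0).trans_le hlow
    exact (div_pos_iff_of_pos_right (by positivity)).1 this |>.le
  rw [← div_le_iff₀ hc0]
  exact hlow.trans (div_le_self hcK (one_le_pow₀ hxy))

lemma dist_le_mul_of_nondeg (hd : d ≠ 0)
    (hK_size : ∀ x y : X, x ≠ y → ‖K x y‖ ≤ cK / dist x y ^ d) (hc0 : 0 < c0)
    (hcKc0 : 1 ≤ cK * c0) {x y : X} {ρ : ℝ} (hρ : 0 < ρ) (hxy : ρ ≤ dist x y)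
    (hK : 1 / (c0 * ρ ^ d) ≤ ‖K x y‖) :
    dist x y ≤ cK * c0 * ρ := by
  have hD : 0 < dist x y := hρ.trans_le hxy
  have hpow := hK.trans (hK_size x y (dist_pos.1 hD))
  rw [div_le_div_iff₀ (by positivity) (by positivity), one_mul] at hpow
  refine le_of_pow_le_pow_left₀ hd (by positivity) ?_
  calc dist x y ^ d ≤ cK * c0 * ρ ^ d := by linarith
    _ ≤ (cK * c0) ^ d * ρ ^ d := by gcongr; exact le_self_pow₀ hcKc0 hd
    _ = (cK * c0 * ρ) ^ d := (mul_pow ..).symm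

lemma norm_sub_le_of_mem_ball_of_size
    (hK_size : ∀ x y : X, x ≠ y → ‖K x y‖ ≤ cK / dist x y ^ d) (hcK : 0 ≤ cK)
    {x x0 y y0 : X} {r : ℝ} (hr : 0 < r) (hfar : 3 * r ≤ dist x0 y0)
    (hx : x ∈ ball x0 r) (hy : y ∈ ball y0 r) :
    ‖K x y - K x0 y0‖ ≤ 2 * (cK / r ^ d) := by
  have hxy := sub_lt_dist_of_mem_ball hx hy
  calc ‖K x y - K x0 y0‖ ≤ ‖K x y‖ + ‖K x0 y0‖ := norm_sub_le _ _
    _ ≤ cK / r ^ d + cK / r ^ d :=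
        add_le_add (norm_le_div_pow_of_le_dist hK_size hcK hr (by linarith))
          (norm_le_div_pow_of_le_dist hK_size hcK hr (by linarith))
    _ = 2 * (cK / r ^ d) := by ring

variable {ω : ℝ → ℝ}
  (hK_smooth : ∀ x x' y : X, dist x x' < dist x y / 2 →
    ‖K x y - K x' y‖ + ‖K y x - K y x'‖ ≤ (1 / dist x y ^ d) * ω (dist x x' / dist x y))
  (hω : MonotoneOn ω (Set.Ico 0 1)) (hω0 : ∀ t ∈ Set.Ico (0 : ℝ) 1, 0 ≤ ω t)
include hK_smooth hω hω0

lemma norm_sub_add_norm_sub_le {x x' y : X} {r ρ : ℝ} (hr : 0 < r) (h2r : 2 * r ≤ ρ)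
    (hxx' : dist x x' < r) (hxy : ρ ≤ dist x y) :
    ‖K x y - K x' y‖ + ‖K y x - K y x'‖ ≤ ω (r / ρ) / ρ ^ d :=
  (hK_smooth x x' y (by linarith)).trans
    (one_div_pow_mul_le_div_pow hω hω0 dist_nonneg hxx'.le hr (by linarith) hxy)

lemma norm_sub_le_of_mem_ball_of_smooth {x x0 y y0 : X} {r ρ : ℝ} (hr : 0 < r)
    (h2r : 2 * r ≤ ρ) (hfar : ρ + 2 * r ≤ dist x0 y0) (hx : x ∈ ball x0 r)
    (hy : y ∈ ball y0 r) :
    ‖K x y - K x0 y0‖ ≤ 2 * (ω (r / ρ) / ρ ^ d) := by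
  have hsecond := norm_sub_add_norm_sub_le hK_smooth hω hω0 hr h2r (mem_ball.1 hy)
    (y := x) (by rw [dist_comm]; linarith [sub_lt_dist_of_mem_ball hx hy])
  have hfirst := norm_sub_add_norm_sub_le hK_smooth hω hω0 hr h2r (mem_ball.1 hx)
    (y := y0) (by linarith [sub_lt_dist_of_mem_ball hx (mem_ball_self (x := y0) hr)])
  calc ‖K x y - K x0 y0‖ ≤ ‖K x y - K x y0‖ + ‖K x y0 - K x0 y0‖ :=
        norm_sub_le_norm_sub_add_norm_sub _ _ _
    _ ≤ 2 * (ω (r / ρ) / ρ ^ d) := by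
        linarith [norm_nonneg (K y x - K y0 x), norm_nonneg (K y0 x - K y0 x0)]

end Kernel

section Oscillation

variable {X F : Type*} [MetricSpace X] [NormedAddCommGroup F] {d : ℕ} {K : X → X → F}
  {cK : ℝ} {ω : ℝ → ℝ}

/-- With `v` the volume of the unit ball, `ε(A) := 4 v · oscillationBound d cK ω A`. Below
`A = 4` the balls are too close for the smoothness estimate and only the size bound is used. -/
noncomputable def oscillationBound (d : ℕ) (cK : ℝ) (ω : ℝ → ℝ) (A : ℝ) : ℝ :=
  if A < 4 then 4 ^ d * cK else 2 ^ d * ω (A - 2)⁻¹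

lemma oscillationBound_nonneg (hcK : 0 ≤ cK) (hω0 : ∀ t ∈ Set.Ico (0 : ℝ) 1, 0 ≤ ω t)
    (A : ℝ) : 0 ≤ oscillationBound d cK ω A := by
  unfold oscillationBound
  split_ifs with hA4
  · positivity
  · have := hω0 (A - 2)⁻¹ ⟨by bound, inv_lt_one_of_one_lt₀ (by linarith)⟩
    positivity

lemma tendsto_oscillationBound (hω_lim : Tendsto ω (nhdsWithin 0 (Set.Ioi 0)) (nhds 0)) :
    Tendsto (oscillationBound d cK ω) atTop (nhds 0) := by
  have hinv : Tendsto (fun A : ℝ => (A - 2)⁻¹) atTop (nhdsWithin 0 (Set.Ioi 0)) :=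
    tendsto_inv_atTop_nhdsGT_zero.comp (tendsto_atTop_add_const_right _ (-2) tendsto_id)
  have hlim := (hω_lim.comp hinv).const_mul (2 ^ d)
  rw [mul_zero] at hlim
  refine hlim.congr' ?_
  filter_upwards [eventually_ge_atTop 4] with A hA
  simp [oscillationBound, not_lt.2 hA]

lemma norm_sub_le_oscillationBound
    (hK_size : ∀ x y : X, x ≠ y → ‖K x y‖ ≤ cK / dist x y ^ d) (hcK : 0 ≤ cK)
    (hK_smooth : ∀ x x' y : X, dist x x' < dist x y / 2 →
      ‖K x y - K x' y‖ + ‖K y x - K y x'‖ ≤ (1 / dist x y ^ d) * ω (dist x x' / dist x y))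
    (hω : MonotoneOn ω (Set.Ico 0 1)) (hω0 : ∀ t ∈ Set.Ico (0 : ℝ) 1, 0 ≤ ω t)
    {x x0 y y0 : X} {A r : ℝ} (hA : 3 ≤ A) (hr : 0 < r) (hfar : A * r ≤ dist x0 y0)
    (hx : x ∈ ball x0 r) (hy : y ∈ ball y0 r) :
    ‖K x y - K x0 y0‖ ≤ 2 * oscillationBound d cK ω A / (A * r) ^ d := by
  unfold oscillationBound
  split_ifs with hA4
  · calc ‖K x y - K x0 y0‖ ≤ 2 * (cK / r ^ d) :=
          norm_sub_le_of_mem_ball_of_size hK_size hcK hr (by nlinarith) hx hy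
      _ ≤ 2 * (cK / (A * r / 4) ^ d) := by gcongr; nlinarith
      _ = 2 * (4 ^ d * cK) / (A * r) ^ d := by rw [div_pow]; field_simp
  · have hratio : r / ((A - 2) * r) = (A - 2)⁻¹ := by field_simp
    have hωA := hω0 (A - 2)⁻¹ ⟨by bound, inv_lt_one_of_one_lt₀ (by linarith)⟩
    calc ‖K x y - K x0 y0‖ ≤ 2 * (ω (r / ((A - 2) * r)) / ((A - 2) * r) ^ d) :=
          norm_sub_le_of_mem_ball_of_smooth hK_smooth hω hω0 hr (by nlinarith) (by linarith) hx hy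
      _ ≤ 2 * (ω (A - 2)⁻¹ / (A * r / 2) ^ d) := by rw [hratio]; gcongr; nlinarith
      _ = 2 * (2 ^ d * ω (A - 2)⁻¹) / (A * r) ^ d := by rw [div_pow]; field_simp

end Oscillation

section Integral

variable {E F : Type*} [NormedAddCommGroup E] [NormedSpace ℝ E] [FiniteDimensional ℝ E]
  [MeasurableSpace E] [BorelSpace E] [NormedAddCommGroup F] (μ : Measure E) [μ.IsAddHaarMeasure]

lemma integral_ball_le_of_norm_le {f : E → ℝ} {z : E} {r M : ℝ} (hr : 0 < r)
    (hf : ∀ w ∈ ball z r, ‖f w‖ ≤ M) :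
    ∫ w in ball z r, f w ∂μ ≤ M * (r ^ Module.finrank ℝ E * μ.real (ball 0 1)) := by
  have hvol : μ.real (ball z r) = r ^ Module.finrank ℝ E * μ.real (ball 0 1) := by
    simp [measureReal_def, μ.addHaar_ball_of_pos z hr, hr.le]
  rw [← hvol]
  exact (Real.le_norm_self _).trans (norm_setIntegral_le_of_norm_le_const measure_ball_lt_top hf)

lemma integral_norm_sub_add_integral_norm_sub_le {K : E → E → F} {x0 y0 x1 y1 : E} {r M : ℝ}
    (hr : 0 < r) (hM : ∀ x ∈ ball x0 r, ∀ y ∈ ball y0 r, ‖K x y - K x0 y0‖ ≤ M)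
    (hy1 : y1 ∈ ball y0 r) (hx1 : x1 ∈ ball x0 r) :
    (∫ y in ball y0 r, ‖K x1 y - K x0 y0‖ ∂μ) + (∫ x in ball x0 r, ‖K x y1 - K x0 y0‖ ∂μ)
      ≤ 2 * M * (r ^ Module.finrank ℝ E * μ.real (ball 0 1)) := by
  have hy := integral_ball_le_of_norm_le μ hr (f := fun y => ‖K x1 y - K x0 y0‖)
    fun y hy => (norm_norm _).trans_le (hM x1 hx1 y hy)
  have hx := integral_ball_le_of_norm_le μ hr (f := fun x => ‖K x y1 - K x0 y0‖)
    fun x hx => (norm_norm _).trans_le (hM x hx y1 hy1)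
  linarith

end Integral

theorem statement0_general
    (d : ℕ) (hd : 1 ≤ d)
    (K : EuclideanSpace ℝ (Fin d) → EuclideanSpace ℝ (Fin d) → ℂ)
    (ω : ℝ → ℝ)
    (hω_nonneg : ∀ t, 0 ≤ t → t < 1 → 0 ≤ ω t)
    (hω_mono : ∀ s t, 0 ≤ s → s ≤ t → t < 1 → ω s ≤ ω t)
    (hω_lim : Tendsto ω (nhdsWithin 0 (Set.Ioi 0)) (nhds 0))
    (cK : ℝ)
    -- standard size estimate
    (hK_size : ∀ x y : EuclideanSpace ℝ (Fin d), x ≠ y →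
      ‖K x y‖ ≤ cK / dist x y ^ d)
    -- standard smoothness estimate with modulus of continuity ω
    (hK_smooth : ∀ x x' y : EuclideanSpace ℝ (Fin d), dist x x' < dist x y / 2 →
      ‖K x y - K x' y‖ + ‖K y x - K y x'‖
        ≤ (1 / dist x y ^ d) * ω (dist x x' / dist x y))
    -- uniform non-degeneracy
    (c0 : ℝ) (hc0 : 0 < c0)
    (hK_nondeg : ∀ (y : EuclideanSpace ℝ (Fin d)) (r : ℝ), 0 < r →
      ∃ x : EuclideanSpace ℝ (Fin d), r ≤ dist x y ∧ 1 / (c0 * r ^ d) ≤ ‖K x y‖) :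
    ∃ c C : ℝ, 0 < c ∧ c ≤ C ∧
      ∃ ε : ℝ → ℝ, (∀ A, 3 ≤ A → 0 ≤ ε A) ∧ Tendsto ε atTop (nhds 0) ∧
        ∀ A : ℝ, 3 ≤ A → ∀ (y0 : EuclideanSpace ℝ (Fin d)) (r : ℝ), 0 < r →
          ∃ x0 : EuclideanSpace ℝ (Fin d),
            A * r ≤ dist x0 y0 ∧ dist x0 y0 ≤ C * A * r ∧
            c / (A * r) ^ d ≤ ‖K x0 y0‖ ∧
            ‖K x0 y0‖ ≤ C / (A * r) ^ d ∧
            ∀ y1 ∈ ball y0 r, ∀ x1 ∈ ball x0 r,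
              (∫ y in ball y0 r, ‖K x1 y - K x0 y0‖)
                + (∫ x in ball x0 r, ‖K x y1 - K x0 y0‖)
                ≤ ε A / A ^ d := by
  have hω : MonotoneOn ω (Set.Ico 0 1) := fun s hs t ht hst => hω_mono s t hs.1 hst ht.2
  have hω0 : ∀ t ∈ Set.Ico (0 : ℝ) 1, 0 ≤ ω t := fun t ht => hω_nonneg t ht.1 ht.2
  have hcKc0 : 1 ≤ cK * c0 := one_le_mul_of_size_of_nondeg hK_size hc0 hK_nondeg
  have hcK : 0 < cK := pos_of_mul_pos_left (one_pos.trans_le hcKc0) hc0.le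
  set v := volume.real (ball (0 : EuclideanSpace ℝ (Fin d)) 1)
  refine ⟨1 / c0, max (cK * c0) cK, by positivity,
    ((div_le_iff₀ hc0).2 hcKc0).trans (le_max_right _ _),
    fun A => 4 * v * oscillationBound d cK ω A,
    fun A _ => mul_nonneg (by positivity) (oscillationBound_nonneg hcK.le hω0 A),
    by simpa only [mul_zero] using (tendsto_oscillationBound hω_lim).const_mul (4 * v), ?_⟩
  intro A hA y0 r hr
  have hAr : 0 < A * r := by positivity
  obtain ⟨x0, hfar, hK⟩ := hK_nondeg y0 (A * r) hAr
  have hM : ∀ x ∈ ball x0 r, ∀ y ∈ ball y0 r,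
      ‖K x y - K x0 y0‖ ≤ 2 * oscillationBound d cK ω A / (A * r) ^ d := fun x hx y hy =>
    norm_sub_le_oscillationBound hK_size hcK.le hK_smooth hω hω0 hA hr hfar hx hy
  refine ⟨x0, hfar, ?_, by rwa [div_div], ?_, fun y1 hy1 x1 hx1 => ?_⟩
  · calc dist x0 y0 ≤ cK * c0 * (A * r) :=
          dist_le_mul_of_nondeg (by omega) hK_size hc0 hcKc0 hAr hfar hK
      _ ≤ max (cK * c0) cK * (A * r) := by gcongr; exact le_max_left _ _
      _ = max (cK * c0) cK * A * r := by ring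
  · exact (norm_le_div_pow_of_le_dist hK_size hcK.le hAr hfar).trans
      (by gcongr; exact le_max_right _ _)
  · calc _ ≤ 2 * (2 * oscillationBound d cK ω A / (A * r) ^ d) * (r ^ d * v) := by
          simpa only [finrank_euclideanSpace_fin] using
            integral_norm_sub_add_integral_norm_sub_le volume hr hM hy1 hx1
      _ = 4 * v * oscillationBound d cK ω A / A ^ d := by field_simp; ring

/-- If `K` is an `ω`-Calderón–Zygmund kernel on `ℝ^d` with `ω(t) → 0` as
`t → 0⁺`, and `K` is uniformly non-degenerate, then there are constants `0 < c ≤ C` and a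
function `ε : ℝ → ℝ` (used on `[3,∞)`) tending to `0` at infinity such that for every `A ≥ 3`
and every ball `B = B(y₀,r)` there is a point `x₀` with `A·r ≤ |x₀ − y₀| ≤ C·A·r`,
`c·(Ar)^{-d} ≤ |K(x₀,y₀)| ≤ C·(Ar)^{-d}`, and for all `y₁ ∈ B`, `x₁ ∈ B̃ := B(x₀,r)`,
`∫_B |K(x₁,y) − K(x₀,y₀)| dy + ∫_{B̃} |K(x,y₁) − K(x₀,y₀)| dx ≤ ε(A)·A^{-d}`. -/
theorem statement0
    (d : ℕ) (hd : 1 ≤ d)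
    (K : EuclideanSpace ℝ (Fin d) → EuclideanSpace ℝ (Fin d) → ℂ)
    (hKmeas : Measurable fun p : EuclideanSpace ℝ (Fin d) × EuclideanSpace ℝ (Fin d) => K p.1 p.2)
    (ω : ℝ → ℝ)
    (hω_nonneg : ∀ t, 0 ≤ t → t < 1 → 0 ≤ ω t)
    (hω_mono : ∀ s t, 0 ≤ s → s ≤ t → t < 1 → ω s ≤ ω t)
    (hω_lim : Tendsto ω (nhdsWithin 0 (Set.Ioi 0)) (nhds 0))
    (cK : ℝ)
    -- standard size estimate
    (hK_size : ∀ x y : EuclideanSpace ℝ (Fin d), x ≠ y →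
      ‖K x y‖ ≤ cK / dist x y ^ d)
    -- standard smoothness estimate with modulus of continuity ω
    (hK_smooth : ∀ x x' y : EuclideanSpace ℝ (Fin d), dist x x' < dist x y / 2 →
      ‖K x y - K x' y‖ + ‖K y x - K y x'‖
        ≤ (1 / dist x y ^ d) * ω (dist x x' / dist x y))
    -- uniform non-degeneracy
    (c0 : ℝ) (hc0 : 0 < c0)
    (hK_nondeg : ∀ (y : EuclideanSpace ℝ (Fin d)) (r : ℝ), 0 < r →
      ∃ x : EuclideanSpace ℝ (Fin d), r ≤ dist x y ∧ 1 / (c0 * r ^ d) ≤ ‖K x y‖) :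
    ∃ c C : ℝ, 0 < c ∧ c ≤ C ∧
      ∃ ε : ℝ → ℝ, (∀ A, 3 ≤ A → 0 ≤ ε A) ∧ Tendsto ε atTop (nhds 0) ∧
        ∀ A : ℝ, 3 ≤ A → ∀ (y0 : EuclideanSpace ℝ (Fin d)) (r : ℝ), 0 < r →
          ∃ x0 : EuclideanSpace ℝ (Fin d),
            A * r ≤ dist x0 y0 ∧ dist x0 y0 ≤ C * A * r ∧
            c / (A * r) ^ d ≤ ‖K x0 y0‖ ∧
            ‖K x0 y0‖ ≤ C / (A * r) ^ d ∧
            ∀ y1 ∈ ball y0 r, ∀ x1 ∈ ball x0 r,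
              (∫ y in ball y0 r, ‖K x1 y - K x0 y0‖)
                + (∫ x in ball x0 r, ‖K x y1 - K x0 y0‖)
                ≤ ε A / A ^ d :=
  statement0_general d hd K ω hω_nonneg hω_mono hω_lim cK hK_size hK_smooth c0 hc0 hK_nondeg
end

section
/- Let d ≥ 1, r ∈ [1,∞), and let b ∈ L^r_loc(ℝ^d;ℂ) satisfy (∫_Q |b − ⟨b⟩_Q|^r)^{1/r} ≤ Θ for every cube Q ⊂ ℝ^d. Then there exist a constant c ∈ ℂ and a function a ∈ L^r(ℝ^d) with ‖a‖_{L^r(ℝ^d)} ≤ Θ such that b = a + c almost everywhere. -/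
/-!
Hölder's inequality bounds `‖⨍_{Q₀} b - ⨍_{Q_n} b‖` by `|Q₀|^{-1/r} ‖b - ⨍_{Q_n} b‖_{L^r(Q_n)}
≤ |Q₀|^{-1/r} Θ` for the cubes `Q_n = [-(n+1), n+1]^d ⊇ Q₀`, so the averages over `Q_n` are
bounded. Along a subsequence they converge to some `c`, and Fatou's lemma applied to
`𝟙_{Q_n} (b - ⨍_{Q_n} b) → b - c` gives `‖b - c‖_{L^r(ℝ^d)} ≤ Θ`.
-/

open MeasureTheory Metric Filter

/-- The closed axis-parallel cube with corner `c` and side length `ℓ` in `ℝ^d`. -/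
def cube {d : ℕ} (c : EuclideanSpace ℝ (Fin d)) (ℓ : ℝ) : Set (EuclideanSpace ℝ (Fin d)) :=
  {x | ∀ i, c i ≤ x i ∧ x i ≤ c i + ℓ}

open scoped ENNReal Topology

namespace MeasureTheory

variable {α E : Type*} [MeasurableSpace α] {μ : Measure α} [NormedAddCommGroup E]

theorem eLpNorm_le_ofReal_of_integral_rpow_le {r Θ : ℝ} (hr : 0 < r) {g : α → E}
    (hg : MemLp g (ENNReal.ofReal r) μ) (h : (∫ x, ‖g x‖ ^ r ∂μ) ^ (1 / r) ≤ Θ) :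
    eLpNorm g (ENNReal.ofReal r) μ ≤ ENNReal.ofReal Θ := by
  rw [hg.eLpNorm_eq_integral_rpow_norm (by simpa using hr) ENNReal.ofReal_ne_top,
    ENNReal.toReal_ofReal hr.le, ← one_div]
  exact ENNReal.ofReal_le_ofReal h

variable [NormedSpace ℝ E]

theorem average_sub_const [CompleteSpace E] [IsFiniteMeasure μ] [NeZero μ] {f : α → E}
    (hf : Integrable f μ) (c : E) : ⨍ x, (f x - c) ∂μ = ⨍ x, f x ∂μ - c := by
  rw [average_eq', average_eq', integral_sub _ (integrable_const c), integral_const,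
    probReal_univ, one_smul]
  exact hf.smul_measure (ENNReal.inv_ne_top.2 (NeZero.ne _))

theorem enorm_average_le_eLpNorm [IsFiniteMeasure μ] [NeZero μ] {p : ℝ≥0∞} (hp : 1 ≤ p)
    {g : α → E} (hg : AEStronglyMeasurable g μ) :
    ‖⨍ x, g x ∂μ‖ₑ ≤ (μ Set.univ)⁻¹ ^ (1 / p).toReal * eLpNorm g p μ := by
  set ν := (μ Set.univ)⁻¹ • μ
  calc ‖⨍ x, g x ∂μ‖ₑ = ‖∫ x, g x ∂ν‖ₑ := by rw [average_eq']
    _ ≤ eLpNorm g 1 ν := by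
      rw [eLpNorm_one_eq_lintegral_enorm]; exact enorm_integral_le_lintegral_enorm g
    _ ≤ eLpNorm g p ν := eLpNorm_le_eLpNorm_of_exponent_le hp (hg.smul_measure _)
    _ = (μ Set.univ)⁻¹ ^ (1 / p).toReal * eLpNorm g p μ :=
      eLpNorm_smul_measure_of_ne_zero (ENNReal.inv_ne_zero.2 (measure_ne_top μ _)) g p μ

theorem enorm_setAverage_sub_le_eLpNorm [CompleteSpace E] {p : ℝ≥0∞} (hp : 1 ≤ p)
    {s t : Set α} (hst : s ⊆ t) (hs : μ s ≠ 0) (hs_top : μ s ≠ ∞) {f : α → E}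
    (hf : IntegrableOn f s μ) (c : E) :
    ‖(⨍ x in s, f x ∂μ) - c‖ₑ ≤
      (μ s)⁻¹ ^ (1 / p).toReal * eLpNorm (fun x => f x - c) p (μ.restrict t) := by
  have : IsFiniteMeasure (μ.restrict s) := isFiniteMeasure_restrict.2 hs_top
  have : NeZero (μ s) := ⟨hs⟩
  rw [← average_sub_const hf c, ← Measure.restrict_apply_univ s]
  refine (enorm_average_le_eLpNorm hp (g := fun x => f x - c)
    (hf.aestronglyMeasurable.sub aestronglyMeasurable_const)).trans ?_
  gcongr

theorem exists_eLpNorm_sub_const_le_of_eLpNorm_sub_setAverage_le [ProperSpace E]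
    {p : ℝ≥0∞} (hp : 1 ≤ p) {s : ℕ → Set α} (hs_mono : Monotone s)
    (hs_univ : ⋃ n, s n = Set.univ) (hs_meas : ∀ n, MeasurableSet (s n)) (hs0 : μ (s 0) ≠ 0)
    (hs0_top : μ (s 0) ≠ ∞) {f : α → E} (hf : AEStronglyMeasurable f μ)
    (hf0 : IntegrableOn f (s 0) μ) {C : ℝ≥0∞} (hC : C ≠ ∞)
    (hosc : ∀ n, eLpNorm (fun x => f x - ⨍ y in s n, f y ∂μ) p (μ.restrict (s n)) ≤ C) :
    ∃ c, eLpNorm (fun x => f x - c) p μ ≤ C := by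
  set m : ℕ → E := fun n => ⨍ y in s n, f y ∂μ
  set R := (μ (s 0))⁻¹ ^ (1 / p).toReal * C
  have hm_bdd : ∀ n, m n ∈ closedBall (m 0) R.toReal := by
    intro n
    have h := (enorm_setAverage_sub_le_eLpNorm hp (hs_mono n.zero_le) hs0 hs0_top hf0
      (m n)).trans (mul_le_mul_right (hosc n) _)
    rw [mem_closedBall, dist_comm, dist_eq_norm, ← toReal_enorm]
    exact ENNReal.toReal_mono (ENNReal.mul_ne_top (by simp [hs0]) hC) h
  obtain ⟨c, -, φ, hφ, hφc⟩ := tendsto_subseq_of_bounded isBounded_closedBall hm_bdd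
  refine ⟨c, Lp.eLpNorm_le_of_ae_tendsto (u := atTop)
    (f := fun k => (s (φ k)).indicator fun x => f x - m (φ k))
    (Eventually.of_forall fun k => ?_) (fun k => ?_) (ae_of_all _ fun x => ?_)⟩
  · rw [eLpNorm_indicator_eq_eLpNorm_restrict (hs_meas _)]
    exact hosc _
  · exact (aestronglyMeasurable_indicator_iff (hs_meas _)).2
      (hf.sub aestronglyMeasurable_const).restrict
  · obtain ⟨N, hN⟩ := Set.mem_iUnion.1 (hs_univ.symm ▸ Set.mem_univ x)
    refine (tendsto_const_nhds.sub hφc).congr' ?_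
    filter_upwards [hφ.tendsto_atTop.eventually_ge_atTop N] with k hk
    exact (Set.indicator_of_mem (hs_mono hk hN) (fun x => f x - m (φ k))).symm

end MeasureTheory

section Cube

variable {d : ℕ}

lemma cube_eq_preimage_pi (c : EuclideanSpace ℝ (Fin d)) (ℓ : ℝ) :
    cube c ℓ = WithLp.ofLp ⁻¹' Set.univ.pi (fun i => Set.Icc (c i) (c i + ℓ)) := by
  ext x
  exact ⟨fun h i _ => Set.mem_Icc.2 (h i), fun h i => Set.mem_Icc.1 (h i trivial)⟩

lemma measurableSet_cube (c : EuclideanSpace ℝ (Fin d)) (ℓ : ℝ) : MeasurableSet (cube c ℓ) := by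
  rw [cube_eq_preimage_pi]
  exact (MeasurableSet.univ_pi fun i => measurableSet_Icc).preimage (by fun_prop)

lemma volume_cube (c : EuclideanSpace ℝ (Fin d)) (ℓ : ℝ) :
    volume (cube c ℓ) = ENNReal.ofReal ℓ ^ d := by
  rw [cube_eq_preimage_pi, ← MeasurableEquiv.coe_toLp_symm,
    (EuclideanSpace.volume_preserving_symm_measurableEquiv_toLp (Fin d)).measure_preimage
      (MeasurableSet.univ_pi fun i => measurableSet_Icc).nullMeasurableSet,
    volume_pi_pi]
  simp [Real.volume_Icc]

instance isFiniteMeasure_restrict_cube (c : EuclideanSpace ℝ (Fin d)) (ℓ : ℝ) :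
    IsFiniteMeasure (volume.restrict (cube c ℓ)) :=
  isFiniteMeasure_restrict.2 (by simp [volume_cube])

lemma mem_cube_neg_iff {R : ℝ} {x : EuclideanSpace ℝ (Fin d)} :
    x ∈ cube (WithLp.toLp 2 fun _ => -R) (2 * R) ↔ ∀ i, |x i| ≤ R := by
  simp only [cube, Set.mem_ofPred_eq, abs_le]
  exact forall_congr' fun i => and_congr Iff.rfl (by constructor <;> intro h <;> linarith)

end Cube

theorem statement11_general (d : ℕ) (r : ℝ) (hr : 1 ≤ r)
    (b : EuclideanSpace ℝ (Fin d) → ℂ)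
    (hbloc : LocallyIntegrable b volume)
    -- b ∈ L^r_loc
    (hbr : ∀ (c : EuclideanSpace ℝ (Fin d)) (ℓ : ℝ), 0 < ℓ →
      IntegrableOn (fun x => ‖b x‖ ^ r) (cube c ℓ) volume)
    (Θ : ℝ)
    (hosc : ∀ (c : EuclideanSpace ℝ (Fin d)) (ℓ : ℝ), 0 < ℓ →
      (∫ x in cube c ℓ, ‖b x - ⨍ y in cube c ℓ, b y‖ ^ r) ^ (1 / r) ≤ Θ) :
    ∃ (c0 : ℂ) (a : EuclideanSpace ℝ (Fin d) → ℂ),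
      MemLp a (ENNReal.ofReal r) volume ∧
      eLpNorm a (ENNReal.ofReal r) volume ≤ ENNReal.ofReal Θ ∧
      ∀ᵐ x ∂(volume : Measure (EuclideanSpace ℝ (Fin d))), b x = a x + c0 := by
  have hr0 : 0 < r := one_pos.trans_le hr
  have hp : 1 ≤ ENNReal.ofReal r := by simpa using ENNReal.ofReal_le_ofReal hr
  have hb_memLp : ∀ c ℓ, 0 < ℓ → MemLp b (ENNReal.ofReal r) (volume.restrict (cube c ℓ)) :=
    fun c ℓ hℓ => (integrable_norm_rpow_iff hbloc.aestronglyMeasurable.restrict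
      (by simpa using hr0) ENNReal.ofReal_ne_top).1
        (by simpa [hr0.le, IntegrableOn] using hbr c ℓ hℓ)
  set Q : ℕ → Set (EuclideanSpace ℝ (Fin d)) :=
    fun n => cube (WithLp.toLp 2 fun _ => -((n : ℝ) + 1)) (2 * ((n : ℝ) + 1))
  have hQ_mono : Monotone Q := fun n m hnm x hx => mem_cube_neg_iff.2 fun i =>
    (mem_cube_neg_iff.1 hx i).trans (by gcongr)
  have hQ_univ : ⋃ n, Q n = Set.univ := by
    refine Set.iUnion_eq_univ_iff.2 fun x => ?_
    obtain ⟨n, hn⟩ := exists_nat_ge ‖x‖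
    exact ⟨n, mem_cube_neg_iff.2 fun i => (PiLp.norm_apply_le x i).trans (by linarith)⟩
  obtain ⟨c0, hc0⟩ := exists_eLpNorm_sub_const_le_of_eLpNorm_sub_setAverage_le hp hQ_mono hQ_univ
    (fun n => measurableSet_cube _ _) (by simp [Q, volume_cube]) (by simp [Q, volume_cube])
    hbloc.aestronglyMeasurable ((hb_memLp _ _ (by norm_num)).integrable hp) ENNReal.ofReal_ne_top
    fun n => eLpNorm_le_ofReal_of_integral_rpow_le hr0
      ((hb_memLp _ _ (by positivity)).sub (memLp_const _)) (hosc _ _ (by positivity))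
  exact ⟨c0, fun x => b x - c0,
    ⟨hbloc.aestronglyMeasurable.sub aestronglyMeasurable_const,
      hc0.trans_lt ENNReal.ofReal_lt_top⟩,
    hc0, ae_of_all _ fun x => (sub_add_cancel _ _).symm⟩

/-- If `b ∈ L^r_loc(ℝ^d)` satisfies `‖b − ⟨b⟩_Q‖_{L^r(Q)} ≤ Θ` for every
cube `Q`, then `b = a + c` a.e. with `c` constant, `a ∈ L^r(ℝ^d)` and `‖a‖_{L^r} ≤ Θ`. -/
theorem statement11 (d : ℕ) (hd : 1 ≤ d) (r : ℝ) (hr : 1 ≤ r)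
    (b : EuclideanSpace ℝ (Fin d) → ℂ)
    (hbmeas : Measurable b)
    (hbloc : LocallyIntegrable b volume)
    -- b ∈ L^r_loc
    (hbr : ∀ (c : EuclideanSpace ℝ (Fin d)) (ℓ : ℝ), 0 < ℓ →
      IntegrableOn (fun x => ‖b x‖ ^ r) (cube c ℓ) volume)
    (Θ : ℝ)
    (hosc : ∀ (c : EuclideanSpace ℝ (Fin d)) (ℓ : ℝ), 0 < ℓ →
      (∫ x in cube c ℓ, ‖b x - ⨍ y in cube c ℓ, b y‖ ^ r) ^ (1 / r) ≤ Θ) :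
    ∃ (c0 : ℂ) (a : EuclideanSpace ℝ (Fin d) → ℂ),
      MemLp a (ENNReal.ofReal r) volume ∧
      eLpNorm a (ENNReal.ofReal r) volume ≤ ENNReal.ofReal Θ ∧
      ∀ᵐ x ∂(volume : Measure (EuclideanSpace ℝ (Fin d))), b x = a x + c0 :=
  statement11_general d r hr b hbloc hbr Θ hosc
end

section
/- Let X be a real Banach space and let V be a subset of the closed unit ball of X with V = −V. For a fixed α > 0, the following three conditions are equivalent: (1) for every continuous linear functional λ ∈ X*, sup_{x ∈ V} |λ(x)| ≥ α·‖λ‖_{X*}; (2) the closed convex hull of V contains the closed ball of radius α centred at 0; (3) the s-convex hull s(V) := { Σ_{j=1}^{∞} λ_j x_j : x_j ∈ V, λ_j ≥ 0, Σ_j λ_j = 1 } (the series converging in X) contains the open ball of radius α centred at 0. -/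
/-!
(1) ⇔ (2) is Hahn–Banach: a point of `closedBall 0 α` outside the closed convex hull of `V` is
strictly separated from it by a functional, and the symmetry of `V` turns the one-sided bound on
`V` into a bound on `|λ|`.

For (2) ⇒ (3), approximate `x / (1 - q)` by an element of `conv V` up to an error of norm `q α`,
rescale the error by `1 / q` and repeat. This writes `x = ∑ (1 - q) qⁿ cₙ` with `cₙ ∈ conv V`,
and `s(V)` is closed under such countable convex combinations of its elements because `V` is
bounded, so the double series converges absolutely. Conversely, normalised partial sums show that
`s(V)` lies in the closure of `conv V`, and `closedBall 0 α` is the closure of `ball 0 α`.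
-/

open Metric Filter Topology

section

variable {X : Type*} [NormedAddCommGroup X] [NormedSpace ℝ X]

/-- The paper's `s(V)`. -/
def seriesConvexHull (V : Set X) : Set X :=
  {x | ∃ (v : ℕ → X) (lam : ℕ → ℝ), (∀ j, v j ∈ V) ∧ (∀ j, 0 ≤ lam j) ∧ HasSum lam 1 ∧
    HasSum (fun j => lam j • v j) x}

theorem subset_seriesConvexHull (V : Set X) : V ⊆ seriesConvexHull V := by
  intro x hx
  refine ⟨fun _ => x, fun j => if j = 0 then 1 else 0, fun _ => hx,
    fun j => by positivity, hasSum_ite_eq 0 1, ?_⟩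
  simpa only [ite_smul, one_smul, zero_smul] using hasSum_ite_eq 0 x

theorem seriesConvexHull_subset_closure_convexHull (V : Set X) :
    seriesConvexHull V ⊆ closure (convexHull ℝ V) := by
  rintro x ⟨v, lam, hv, hlam, hlam1, hx⟩
  have hlim : Tendsto (fun N => (Finset.range N).centerMass lam v) atTop (𝓝 x) := by
    simpa [Finset.centerMass] using
      (hlam1.tendsto_sum_nat.inv₀ one_ne_zero).smul hx.tendsto_sum_nat
  refine mem_closure_of_tendsto hlim ?_
  filter_upwards [hlam1.tendsto_sum_nat.eventually (lt_mem_nhds one_pos)] with N hN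
  exact (Finset.range N).centerMass_mem_convexHull (fun j _ => hlam j) hN fun j _ => hv j

theorem mem_seriesConvexHull_of_hasSum [CompleteSpace X] {V : Set X}
    (hV : Bornology.IsBounded V) {c : ℕ → X} (hc : ∀ n, c n ∈ seriesConvexHull V)
    {ν : ℕ → ℝ} (hν : ∀ n, 0 ≤ ν n) (hν1 : HasSum ν 1) {x : X}
    (hx : HasSum (fun n => ν n • c n) x) : x ∈ seriesConvexHull V := by
  choose v lam hv hlam hlam1 hc using hc
  obtain ⟨R, hR⟩ := hV.exists_norm_le
  let μ : ℕ × ℕ → ℝ := fun p => ν p.1 * lam p.1 p.2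
  have hμ : ∀ p, 0 ≤ μ p := fun p => mul_nonneg (hν _) (hlam _ _)
  have hμfib : ∀ n, HasSum (fun i => μ (n, i)) (ν n) := fun n => by
    simpa using (hlam1 n).mul_left (ν n)
  have hμsum : Summable μ := by
    refine (summable_prod_of_nonneg hμ).2 ⟨fun n => (hμfib n).summable, ?_⟩
    simpa only [fun n => (hμfib n).tsum_eq] using hν1.summable
  have hμvsum : Summable fun p => μ p • v p.1 p.2 := by
    refine .of_norm_bounded (hμsum.mul_right R) fun p => ?_
    rw [norm_smul, Real.norm_of_nonneg (hμ p)]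
    exact mul_le_mul_of_nonneg_left (hR _ (hv _ _)) (hμ p)
  have hμ1 : HasSum μ 1 := by
    obtain ⟨s, hs⟩ := hμsum
    rwa [(hs.prod_fiberwise hμfib).unique hν1] at hs
  have hμv : HasSum (fun p => μ p • v p.1 p.2) x := by
    obtain ⟨s, hs⟩ := hμvsum
    refine (hs.prod_fiberwise fun n => ?_).unique hx ▸ hs
    simpa only [μ, mul_smul] using (hc n).const_smul (ν n)
  let e : ℕ ≃ ℕ × ℕ := (Denumerable.eqv (ℕ × ℕ)).symm
  exact ⟨fun j => v (e j).1 (e j).2, fun j => μ (e j), fun j => hv _ _, fun j => hμ _,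
    (e.hasSum_iff).2 hμ1, (e.hasSum_iff (f := fun p => μ p • v p.1 p.2)).2 hμv⟩

theorem convex_seriesConvexHull [CompleteSpace X] {V : Set X} (hV : Bornology.IsBounded V) :
    Convex ℝ (seriesConvexHull V) := by
  intro a ha b hb s t hs ht hst
  let ν : ℕ → ℝ := fun n => if n = 0 then s else if n = 1 then t else 0
  let c : ℕ → X := fun n => if n = 0 then a else b
  have hνc : ∀ n ∉ Finset.range 2, ν n • c n = 0 := fun n hn => by
    simp only [Finset.mem_range, not_lt] at hn
    simp [ν, show n ≠ 0 by omega, show n ≠ 1 by omega]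
  have hν : ∀ n ∉ Finset.range 2, ν n = 0 := fun n hn => by
    simp only [Finset.mem_range, not_lt] at hn
    simp [ν, show n ≠ 0 by omega, show n ≠ 1 by omega]
  refine mem_seriesConvexHull_of_hasSum hV (c := c) (ν := ν) (fun n => ?_) (fun n => ?_) ?_ ?_
  · dsimp only [c]; split_ifs; exacts [ha, hb]
  · dsimp only [ν]; split_ifs <;> linarith
  · simpa [Finset.sum_range_succ, ν, hst] using hasSum_sum_of_ne_finset_zero hν
  · simpa [Finset.sum_range_succ, ν, c] using hasSum_sum_of_ne_finset_zero hνc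

theorem exists_hasSum_pow_smul_of_forall_exists_norm_sub_le {C : Set X} {q r : ℝ}
    (hq0 : 0 < q) (hq1 : q < 1) (happrox : ∀ y : X, ‖y‖ ≤ r → ∃ c ∈ C, ‖y - c‖ ≤ q * r)
    {y : X} (hy : ‖y‖ ≤ r) : ∃ c : ℕ → X, (∀ n, c n ∈ C) ∧ HasSum (fun n => q ^ n • c n) y := by
  choose! approx happroxC happroxle using happrox
  -- `Y n` is the rescaled error after `n` approximation steps.
  let Y : ℕ → X := fun n => Nat.rec y (fun _ z => q⁻¹ • (z - approx z)) n
  have hY : ∀ n, ‖Y n‖ ≤ r := by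
    intro n
    induction n with
    | zero => exact hy
    | succ n ih =>
      change ‖q⁻¹ • (Y n - approx (Y n))‖ ≤ r
      rw [norm_smul, Real.norm_of_nonneg (inv_nonneg.2 hq0.le), inv_mul_le_iff₀ hq0]
      exact happroxle _ ih
  have hstep : ∀ n, q ^ n • approx (Y n) = q ^ n • Y n - q ^ (n + 1) • Y (n + 1) := by
    intro n
    change _ = _ - q ^ (n + 1) • q⁻¹ • (Y n - approx (Y n))
    rw [smul_smul, pow_succ, mul_assoc, mul_inv_cancel₀ hq0.ne', mul_one, smul_sub, sub_sub_cancel]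
  have hr : 0 ≤ r := (norm_nonneg y).trans hy
  have hnorm : ∀ n, ‖q ^ n • approx (Y n)‖ ≤ 2 * r * q ^ n := by
    intro n
    rw [hstep, pow_succ]
    refine (norm_sub_le _ _).trans ?_
    rw [norm_smul, norm_smul, Real.norm_of_nonneg (by positivity),
      Real.norm_of_nonneg (by positivity)]
    have hqn : 0 ≤ q ^ n := by positivity
    nlinarith [mul_le_mul_of_nonneg_left (hY n) hqn,
      mul_le_mul_of_nonneg_left (hY (n + 1)) (mul_nonneg hqn hq0.le),
      mul_le_mul_of_nonneg_left hq1.le (mul_nonneg hqn hr)]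
  have hsummable : Summable fun n => ‖q ^ n • approx (Y n)‖ :=
    .of_nonneg_of_le (fun _ => norm_nonneg _) hnorm
      ((summable_geometric_of_lt_one hq0.le hq1).mul_left _)
  have htail : Tendsto (fun n => q ^ n • Y n) atTop (𝓝 0) := by
    refine squeeze_zero_norm (fun n => ?_)
      (by simpa using (tendsto_pow_atTop_nhds_zero_of_lt_one hq0.le hq1).mul_const r)
    rw [norm_smul, Real.norm_of_nonneg (by positivity)]
    exact mul_le_mul_of_nonneg_left (hY n) (by positivity)
  refine ⟨fun n => approx (Y n), fun n => happroxC _ (hY n),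
    (hasSum_iff_tendsto_nat_of_summable_norm hsummable).2 ?_⟩
  simp only [hstep, Finset.sum_range_sub', pow_zero, one_smul]
  change Tendsto (fun n => y - q ^ n • Y n) atTop (𝓝 y)
  simpa using (tendsto_const_nhds (x := y)).sub htail

theorem ball_subset_seriesConvexHull [CompleteSpace X] {V : Set X} (hV : Bornology.IsBounded V)
    {α : ℝ} (h : closedBall (0 : X) α ⊆ closure (convexHull ℝ V)) :
    ball (0 : X) α ⊆ seriesConvexHull V := by
  intro x hx
  have hxα : ‖x‖ < α := mem_ball_zero_iff.1 hx
  have hα : 0 < α := (norm_nonneg x).trans_lt hxα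
  obtain ⟨q, hq0, hqx⟩ : ∃ q, 0 < q ∧ q < 1 - ‖x‖ / α :=
    exists_between (by rwa [sub_pos, div_lt_one hα])
  have hq1 : q < 1 := hqx.trans_le (by linarith [div_nonneg (norm_nonneg x) hα.le])
  have happrox : ∀ y : X, ‖y‖ ≤ α → ∃ c ∈ convexHull ℝ V, ‖y - c‖ ≤ q * α := fun y hy => by
    obtain ⟨c, hc, hyc⟩ :=
      Metric.mem_closure_iff.1 (h (mem_closedBall_zero_iff.2 hy)) (q * α) (by positivity)
    exact ⟨c, hc, (dist_eq_norm y c ▸ hyc).le⟩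
  have hy : ‖(1 - q)⁻¹ • x‖ ≤ α := by
    rw [norm_smul, Real.norm_of_nonneg (inv_nonneg.2 (sub_pos.2 hq1).le),
      inv_mul_le_iff₀ (sub_pos.2 hq1)]
    exact ((div_lt_iff₀ hα).1 (by linarith)).le
  obtain ⟨c, hc, hsum⟩ := exists_hasSum_pow_smul_of_forall_exists_norm_sub_le hq0 hq1 happrox hy
  refine mem_seriesConvexHull_of_hasSum hV (ν := fun n => (1 - q) * q ^ n)
    (fun n => convexHull_min (subset_seriesConvexHull V) (convex_seriesConvexHull hV) (hc n))
    (fun n => mul_nonneg (sub_pos.2 hq1).le (pow_nonneg hq0.le n)) ?_ ?_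
  · simpa [mul_inv_cancel₀ (sub_pos.2 hq1).ne'] using
      (hasSum_geometric_of_lt_one hq0.le hq1).mul_left (1 - q)
  · simpa only [smul_smul, mul_inv_cancel₀ (sub_pos.2 hq1).ne', one_smul] using
      hsum.const_smul (1 - q)

theorem closedBall_subset_closure_convexHull_of_forall_abs_le {V : Set X}
    (hV : ∀ x ∈ V, -x ∈ V) {α : ℝ}
    (h : ∀ f : X →L[ℝ] ℝ, ∀ c : ℝ, (∀ x ∈ V, |f x| ≤ c) → α * ‖f‖ ≤ c) :
    closedBall (0 : X) α ⊆ closure (convexHull ℝ V) := by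
  intro y hy
  by_contra hyC
  obtain ⟨f, u, hfu, huy⟩ :=
    geometric_hahn_banach_closed_point (convex_convexHull ℝ V).closure isClosed_closure hyC
  have hfV : ∀ x ∈ V, f x < u := fun x hx => hfu x (subset_closure (subset_convexHull ℝ V hx))
  have hbound : ∀ x ∈ V, |f x| ≤ u := fun x hx =>
    abs_le.2 ⟨by linarith [map_neg f x ▸ hfV (-x) (hV x hx)], (hfV x hx).le⟩
  have hy' : ‖y‖ ≤ α := mem_closedBall_zero_iff.1 hy
  linarith [h f u hbound, (le_abs_self (f y)).trans (f.le_opNorm y),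
    mul_le_mul_of_nonneg_left hy' (norm_nonneg f)]

theorem mul_opNorm_le_of_closedBall_subset_closure_convexHull {V : Set X} {α : ℝ} (hα : 0 < α)
    (h : closedBall (0 : X) α ⊆ closure (convexHull ℝ V)) {f : X →L[ℝ] ℝ} {c : ℝ}
    (hf : ∀ x ∈ V, |f x| ≤ c) : α * ‖f‖ ≤ c := by
  have hclosed : IsClosed (f ⁻¹' closedBall 0 c) := isClosed_closedBall.preimage f.continuous
  have hconvex : Convex ℝ (f ⁻¹' closedBall 0 c) :=
    (convex_closedBall 0 c).linear_preimage f.toLinearMap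
  have hball : ∀ z ∈ closedBall (0 : X) α, ‖f z‖ ≤ c := fun z hz =>
    mem_closedBall_zero_iff.1 <| closure_minimal (convexHull_min (fun x hx => by
      simpa using hf x hx) hconvex) hclosed (h hz)
  calc α * ‖f‖ ≤ α * (c / α) := by gcongr; exact f.opNorm_bound_of_ball_bound hα c hball
    _ = c := by field_simp

end

/-- functional-analytic lemma of Coifman–Lions–Meyer–Semmes. For a
symmetric subset `V` of the closed unit ball of a real Banach space `X` and `α > 0`, the
following are equivalent: (1) `sup_{x ∈ V} |λ(x)| ≥ α‖λ‖` for every `λ ∈ X*` (phrased via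
upper bounds); (2) the closed convex hull of `V` contains `closedBall 0 α`; (3) the
`s`-convex hull of `V` contains `ball 0 α`. -/
theorem statement14 (X : Type*) [NormedAddCommGroup X] [NormedSpace ℝ X] [CompleteSpace X]
    (V : Set X) (hV1 : V ⊆ closedBall (0 : X) 1) (hVsymm : ∀ x ∈ V, -x ∈ V)
    (α : ℝ) (hα : 0 < α) :
    ((∀ lam : X →L[ℝ] ℝ, ∀ cb : ℝ, (∀ x ∈ V, |lam x| ≤ cb) → α * ‖lam‖ ≤ cb) ↔
      closedBall (0 : X) α ⊆ closure (convexHull ℝ V)) ∧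
    (closedBall (0 : X) α ⊆ closure (convexHull ℝ V) ↔
      ball (0 : X) α ⊆
        {x : X | ∃ (v : ℕ → X) (lam : ℕ → ℝ),
          (∀ j, v j ∈ V) ∧ (∀ j, 0 ≤ lam j) ∧ HasSum lam 1 ∧
          HasSum (fun j => lam j • v j) x}) := by
  have hVb : Bornology.IsBounded V := isBounded_closedBall.subset hV1
  refine ⟨⟨closedBall_subset_closure_convexHull_of_forall_abs_le hVsymm,
    fun h _ _ hf => mul_opNorm_le_of_closedBall_subset_closure_convexHull hα h hf⟩,
    ⟨ball_subset_seriesConvexHull hVb, fun h => ?_⟩⟩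
  calc closedBall (0 : X) α = closure (ball 0 α) := (closure_ball 0 hα.ne').symm
    _ ⊆ closure (seriesConvexHull V) := closure_mono h
    _ ⊆ closure (convexHull ℝ V) :=
      closure_minimal (seriesConvexHull_subset_closure_convexHull V) isClosed_closure
end

section
/- Let d ≥ 1, let k ≥ 1 be an integer, and let b ∈ L^k_loc(ℝ^d;ℝ). Let K : ℝ^d × ℝ^d → ℂ be measurable and let B, B̃ ⊂ ℝ^d be disjoint balls of equal radius such that (x,y) ↦ |b(x) − b(y)|^k·|K(x,y)| is integrable on B̃ × B and, for some complex number σ with |σ| = 1 and some c1 > 0, Re(σ·K(x,y)) ≥ c1/|B| for all x ∈ B̃ and y ∈ B. Then there exist measurable sets E_1, E_2 ⊆ B and Ẽ_1, Ẽ_2 ⊆ B̃ such that inf_{c ∈ ℝ} ∫_B |b(y) − c|^k dy ≤ (C_k/c1)·Σ_{i=1}^{2} |∬_{Ẽ_i × E_i} (b(x) − b(y))^k K(x,y) dy dx|, where C_k depends only on k. -/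
/-!
Let `m` be a median of `b` on `B̃`, and put `Ẽ₁ = B̃ ∩ {b ≥ m}`, `E₁ = B ∩ {b ≤ m}`,
`Ẽ₂ = B̃ ∩ {b ≤ m}`, `E₂ = B ∩ {b > m}`. On `Ẽ₁ × E₁` we have `b(x) - b(y) ≥ m - b(y) ≥ 0`, so the
positivity of `σK` gives `Re(σ (b(x) - b(y))^k K(x,y)) ≥ (c₁/|B|) (m - b(y))^k`; integrating over
`Ẽ₁ × E₁` and using `|Ẽ₁| ≥ |B̃|/2 = |B|/2` yields
`(c₁/2) ∫_{E₁} (m - b)^k ≤ |⟨1_{Ẽ₁}, T_b^k 1_{E₁}⟩|`.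
The same argument for `-b` bounds `∫_{E₂} (b - m)^k`, and the two integrals add up to
`∫_B |b - m|^k`. Hence the estimate holds with `C_k = 2`.
-/

open MeasureTheory Set Filter Topology Metric
open scoped ENNReal

theorem exists_isLeast_le_measure_Iic (ν : Measure ℝ) [IsFiniteMeasure ν] {a : ℝ≥0∞}
    (ha₀ : 0 < a) (ha : a < ν univ) : ∃ m, IsLeast {t | a ≤ ν (Iic t)} m := by
  set S := {t | a ≤ ν (Iic t)}
  have hne : S.Nonempty := ((tendsto_measure_Iic_atTop ν).eventually_const_le ha).exists
  have hbdd : BddBelow S := by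
    have hlim : Tendsto (fun t => ν (Iic t)) atBot (𝓝 0) := by
      have := tendsto_measure_iInter_atBot (μ := ν) (fun _ => measurableSet_Iic.nullMeasurableSet)
        monotone_Iic ⟨0, measure_ne_top ν _⟩
      rwa [iInter_Iic_eq_empty_iff.2 (by simp), measure_empty] at this
    obtain ⟨t₀, ht₀⟩ := (hlim.eventually_lt_const ha₀).exists_forall_of_atBot
    exact ⟨t₀, fun t ht => le_of_not_gt fun h => (ht₀ t h.le).not_ge ht⟩
  refine ⟨sInf S, ?_, fun t ht => csInf_le hbdd ht⟩
  have hlim := tendsto_measure_biInter_gt (μ := ν) (s := Iic) (a := sInf S)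
    (fun _ _ => measurableSet_Iic.nullMeasurableSet) (fun _ _ _ h => Iic_subset_Iic.2 h)
    ⟨sInf S + 1, by linarith, measure_ne_top ν _⟩
  have hinter : ⋂ r > sInf S, Iic r = Iic (sInf S) := by
    ext x
    simpa using ⟨le_of_forall_gt_imp_ge_of_dense, fun hx r hr => hx.trans hr.le⟩
  rw [hinter] at hlim
  refine ge_of_tendsto hlim (eventually_nhdsWithin_of_forall fun r hr => ?_)
  obtain ⟨t, ht, htr⟩ := exists_lt_of_csInf_lt hne hr
  exact ht.trans (measure_mono (Iic_subset_Iic.2 htr.le))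

theorem exists_median (ν : Measure ℝ) [IsFiniteMeasure ν] :
    ∃ m, ν univ / 2 ≤ ν (Iic m) ∧ ν univ / 2 ≤ ν (Ici m) := by
  rcases eq_or_ne (ν univ) 0 with h0 | h0
  · exact ⟨0, by simp [h0]⟩
  have ha₀ : 0 < ν univ / 2 := ENNReal.half_pos h0
  have ha : ν univ / 2 < ν univ := ENNReal.half_lt_self h0 (measure_ne_top _ _)
  have hneg : ∀ t, ν.map Neg.neg (Iic t) = ν (Ici (-t)) := fun t => by
    rw [Measure.map_apply measurable_neg measurableSet_Iic, neg_preimage, neg_Iic]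
  obtain ⟨m, hm, hm_least⟩ := exists_isLeast_le_measure_Iic ν ha₀ ha
  obtain ⟨m', hm', hm'_least⟩ := exists_isLeast_le_measure_Iic (ν.map Neg.neg) (a := ν univ / 2)
    ha₀ (by rwa [Measure.map_apply measurable_neg MeasurableSet.univ, preimage_univ])
  -- `m` and `-m'` cannot cross, since `ν (Iic t) + ν (Ici t) ≥ ν univ` for every `t`.
  have hmm' : m ≤ -m' := by
    by_contra! h
    obtain ⟨t, hm't, htm⟩ := exists_between h
    have hIic : ν (Iic t) < ν univ / 2 := lt_of_not_ge fun ht => htm.not_ge (hm_least ht)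
    have hIci : ν (Ici t) < ν univ / 2 := lt_of_not_ge fun ht =>
      (neg_lt.2 hm't).not_ge (hm'_least (by rwa [mem_ofPred_eq, hneg, neg_neg]))
    refine (ENNReal.add_lt_add hIic hIci).not_ge ?_
    rw [ENNReal.add_halves, ← Iic_union_Ici (a := t)]
    exact measure_union_le _ _
  refine ⟨m, hm, ?_⟩
  calc ν univ / 2 ≤ ν (Ici (-m')) := by rw [← hneg]; exact hm'
    _ ≤ ν (Ici m) := measure_mono (Ici_subset_Ici.2 hmm')

section

variable {α : Type*}

def commutatorKernel (k : ℕ) (b : α → ℝ) (K : α → α → ℂ) (z : α × α) : ℂ :=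
  (((b z.1 - b z.2) ^ k : ℝ) : ℂ) * K z.1 z.2

theorem norm_commutatorKernel (k : ℕ) (b : α → ℝ) (K : α → α → ℂ) (z : α × α) :
    ‖commutatorKernel k b K z‖ = |b z.1 - b z.2| ^ k * ‖K z.1 z.2‖ := by
  rw [commutatorKernel, norm_mul, Complex.norm_real, Real.norm_eq_abs, abs_pow]

theorem commutatorKernel_neg (k : ℕ) (b : α → ℝ) (K : α → α → ℂ) :
    commutatorKernel k (-b) K = fun z => (-1) ^ k * commutatorKernel k b K z := by
  ext z
  simp only [commutatorKernel, Pi.neg_apply]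
  rw [show -b z.1 - -b z.2 = -(b z.1 - b z.2) by ring, neg_pow]
  push_cast
  ring

variable [MeasurableSpace α] {μ : Measure α}

theorem setIntegral_le_norm_setIntegral_of_le_re {𝕜 : Type*} [RCLike 𝕜] {s : Set α}
    (hs : MeasurableSet s) {f : α → 𝕜} {g : α → ℝ} (hf : IntegrableOn f s μ)
    (hg : IntegrableOn g s μ) {σ : 𝕜} (hσ : ‖σ‖ = 1) (h : ∀ x ∈ s, g x ≤ RCLike.re (σ * f x)) :
    ∫ x in s, g x ∂μ ≤ ‖∫ x in s, f x ∂μ‖ :=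
  calc ∫ x in s, g x ∂μ ≤ ∫ x in s, RCLike.re (σ * f x) ∂μ :=
        setIntegral_mono_on hg (hf.const_mul σ).re hs h
    _ = RCLike.re (σ * ∫ x in s, f x ∂μ) := by rw [integral_re (hf.const_mul σ), integral_const_mul]
    _ ≤ ‖σ * ∫ x in s, f x ∂μ‖ := RCLike.re_le_norm _
    _ = ‖∫ x in s, f x ∂μ‖ := by rw [norm_mul, hσ, one_mul]

theorem integrableOn_abs_sub_const_pow {s : Set α} {b : α → ℝ} {k : ℕ}
    (hb : AEStronglyMeasurable b (μ.restrict s)) (hbs : IntegrableOn (fun y => |b y| ^ k) s μ)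
    (hs : μ s ≠ ∞) (m : ℝ) : IntegrableOn (fun y => |b y - m| ^ k) s μ := by
  have hbound := (hbs.add (integrableOn_const (C := |m| ^ k) hs)).const_mul (2 ^ (k - 1))
  refine Integrable.mono' hbound (by fun_prop) (ae_of_all _ fun y => ?_)
  rw [Real.norm_eq_abs, abs_pow, abs_abs]
  calc |b y - m| ^ k ≤ (|b y| + |m|) ^ k := by gcongr; exact abs_sub _ _
    _ ≤ 2 ^ (k - 1) * (|b y| ^ k + |m| ^ k) := add_pow_le (abs_nonneg _) (abs_nonneg _) k

theorem exists_median_restrict {b : α → ℝ} {s : Set α} (hb : Measurable b) (hs : μ s ≠ ∞) :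
    ∃ m, μ.real s / 2 ≤ μ.real (b ⁻¹' Iic m ∩ s) ∧ μ.real s / 2 ≤ μ.real (b ⁻¹' Ici m ∩ s) := by
  have : IsFiniteMeasure (μ.restrict s) := isFiniteMeasure_restrict.2 hs
  obtain ⟨m, hle, hge⟩ := exists_median ((μ.restrict s).map b)
  simp only [Measure.map_apply hb measurableSet_Iic, Measure.map_apply hb measurableSet_Ici,
    Measure.map_apply hb MeasurableSet.univ, Measure.restrict_apply (hb measurableSet_Iic),
    Measure.restrict_apply (hb measurableSet_Ici), preimage_univ, Measure.restrict_apply_univ]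
    at hle hge
  have hreal : ∀ t ⊆ s, μ s / 2 ≤ μ t → μ.real s / 2 ≤ μ.real t := fun t ht h => by
    simpa [Measure.real] using ENNReal.toReal_mono (measure_ne_top_of_subset ht hs) h
  exact ⟨m, hreal _ inter_subset_right hle, hreal _ inter_subset_right hge⟩

/-- The off-support pairing `⟨1_{Ẽ}, T_b^k 1_E⟩`. -/
noncomputable def commutatorPairing (μ : Measure α) (k : ℕ) (b : α → ℝ) (K : α → α → ℂ)
    (Et E : Set α) : ℂ :=
  ∫ z in Et ×ˢ E, commutatorKernel k b K z ∂μ.prod μ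

theorem integrableOn_commutatorKernel_iff {k : ℕ} {b : α → ℝ} {K : α → α → ℂ}
    (hb : Measurable b) (hK : Measurable fun z : α × α => K z.1 z.2) {s : Set (α × α)}
    {ν : Measure (α × α)} :
    IntegrableOn (commutatorKernel k b K) s ν ↔
      IntegrableOn (fun z => |b z.1 - b z.2| ^ k * ‖K z.1 z.2‖) s ν := by
  have hmeas : Measurable (commutatorKernel k b K) :=
    (Complex.measurable_ofReal.comp
      (((hb.comp measurable_fst).sub (hb.comp measurable_snd)).pow_const k)).mul hK
  simp_rw [IntegrableOn, ← norm_commutatorKernel,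
    integrable_norm_iff hmeas.aestronglyMeasurable.restrict]

theorem integrableOn_commutatorKernel_neg_iff {k : ℕ} {b : α → ℝ} {K : α → α → ℂ}
    {s : Set (α × α)} {ν : Measure (α × α)} :
    IntegrableOn (commutatorKernel k (-b) K) s ν ↔ IntegrableOn (commutatorKernel k b K) s ν := by
  rw [commutatorKernel_neg]
  exact integrable_const_mul_iff (isUnit_neg_one.pow k) _

theorem norm_commutatorPairing_neg (k : ℕ) (b : α → ℝ) (K : α → α → ℂ) (Et E : Set α) :
    ‖commutatorPairing μ k (-b) K Et E‖ = ‖commutatorPairing μ k b K Et E‖ := by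
  simp [commutatorPairing, commutatorKernel_neg, integral_const_mul]

theorem mul_measureReal_mul_setIntegral_le_norm_commutatorPairing [SFinite μ] {k : ℕ}
    {b : α → ℝ} {K : α → α → ℂ} {m c : ℝ} {σ : ℂ} {Et E : Set α}
    (hEt : MeasurableSet Et) (hE : MeasurableSet E) (hEt_fin : μ Et ≠ ∞)
    (hbEt : ∀ x ∈ Et, m ≤ b x) (hbE : ∀ y ∈ E, b y ≤ m)
    (hf : IntegrableOn (commutatorKernel k b K) (Et ×ˢ E) (μ.prod μ))
    (hg : IntegrableOn (fun y => (m - b y) ^ k) E μ) (hσ : ‖σ‖ = 1) (hc : 0 ≤ c)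
    (hK : ∀ x ∈ Et, ∀ y ∈ E, c ≤ (σ * K x y).re) :
    c * μ.real Et * ∫ y in E, (m - b y) ^ k ∂μ ≤ ‖commutatorPairing μ k b K Et E‖ := by
  have : IsFiniteMeasure (μ.restrict Et) := isFiniteMeasure_restrict.2 hEt_fin
  have hprod : ∫ z in Et ×ˢ E, c * (m - b z.2) ^ k ∂μ.prod μ =
      c * μ.real Et * ∫ y in E, (m - b y) ^ k ∂μ := by
    rw [setIntegral_prod_mul (fun _ => c) (fun y => (m - b y) ^ k), setIntegral_const,
      smul_eq_mul, mul_comm (μ.real Et)]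
  rw [← hprod]
  refine setIntegral_le_norm_setIntegral_of_le_re (hEt.prod hE) hf ?_ hσ fun z ⟨hx, hy⟩ => ?_
  · rw [IntegrableOn, ← Measure.prod_restrict]
    exact (integrable_const c).mul_prod hg
  have hbxy : m - b z.2 ≤ b z.1 - b z.2 := by linarith [hbEt _ hx]
  have hmy : 0 ≤ m - b z.2 := sub_nonneg.2 (hbE _ hy)
  calc c * (m - b z.2) ^ k ≤ c * (b z.1 - b z.2) ^ k := by gcongr
    _ ≤ (σ * K z.1 z.2).re * (b z.1 - b z.2) ^ k :=
        mul_le_mul_of_nonneg_right (hK _ hx _ hy) (pow_nonneg (hmy.trans hbxy) k)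
    _ = RCLike.re (σ * commutatorKernel k b K z) := by
        rw [commutatorKernel, mul_left_comm, RCLike.re_to_complex, Complex.re_ofReal_mul, mul_comm]

theorem exists_mul_setIntegral_abs_sub_pow_le_sum_norm_commutatorPairing [SFinite μ] {k : ℕ}
    {b : α → ℝ} {K : α → α → ℂ} {c : ℝ} {σ : ℂ} {B Bt : Set α} (hb : Measurable b)
    (hB : MeasurableSet B) (hBt : MeasurableSet Bt) (hB_fin : μ B ≠ ∞) (hBt_fin : μ Bt ≠ ∞)
    (hbB : IntegrableOn (fun y => |b y| ^ k) B μ)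
    (hf : IntegrableOn (commutatorKernel k b K) (Bt ×ˢ B) (μ.prod μ)) (hσ : ‖σ‖ = 1)
    (hc : 0 ≤ c) (hK : ∀ x ∈ Bt, ∀ y ∈ B, c ≤ (σ * K x y).re) :
    ∃ m : ℝ, ∃ Es Ets : Fin 2 → Set α, (∀ i, MeasurableSet (Es i)) ∧
      (∀ i, MeasurableSet (Ets i)) ∧ (∀ i, Es i ⊆ B) ∧ (∀ i, Ets i ⊆ Bt) ∧
      c * (μ.real Bt / 2) * ∫ y in B, |b y - m| ^ k ∂μ ≤
        ∑ i, ‖commutatorPairing μ k b K (Ets i) (Es i)‖ := by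
  obtain ⟨m, hle, hge⟩ := exists_median_restrict hb hBt_fin
  set L := b ⁻¹' Iic m
  have hL : MeasurableSet L := hb measurableSet_Iic
  have hg := integrableOn_abs_sub_const_pow hb.aestronglyMeasurable hbB hB_fin m
  have hg₁ : EqOn (fun y => |b y - m| ^ k) (fun y => (m - b y) ^ k) (B ∩ L) := fun y hy => by
    simp only [abs_sub_comm (b y), abs_of_nonneg (sub_nonneg.2 (show b y ≤ m from hy.2))]
  have hg₂ : EqOn (fun y => |b y - m| ^ k) (fun y => (-m - (-b) y) ^ k) (B \ L) := fun y hy => by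
    have : m < b y := lt_of_not_ge hy.2
    simp only [Pi.neg_apply, neg_sub_neg, abs_of_pos (sub_pos.2 this)]
  have h₁ := mul_measureReal_mul_setIntegral_le_norm_commutatorPairing
    ((hb measurableSet_Ici).inter hBt) (hB.inter hL)
    (measure_ne_top_of_subset inter_subset_right hBt_fin)
    (fun x hx => hx.1) (fun y hy => hy.2)
    (hf.mono_set (prod_mono inter_subset_right inter_subset_left))
    ((hg.mono_set inter_subset_left).congr_fun hg₁ (hB.inter hL)) hσ hc
    (fun x hx y hy => hK x hx.2 y hy.1)
  have h₂ := mul_measureReal_mul_setIntegral_le_norm_commutatorPairing (b := -b) (m := -m)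
    (hL.inter hBt) (hB.diff hL) (measure_ne_top_of_subset inter_subset_right hBt_fin)
    (fun x hx => neg_le_neg hx.1) (fun y hy => neg_le_neg (lt_of_not_ge hy.2).le)
    (integrableOn_commutatorKernel_neg_iff.2
      (hf.mono_set (prod_mono inter_subset_right sdiff_subset)))
    ((hg.mono_set sdiff_subset).congr_fun hg₂ (hB.diff hL)) hσ hc
    (fun x hx y hy => hK x hx.2 y hy.1)
  rw [norm_commutatorPairing_neg] at h₂
  refine ⟨m, ![B ∩ L, B \ L], ![b ⁻¹' Ici m ∩ Bt, L ∩ Bt], ?_, ?_, ?_, ?_, ?_⟩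
  · simp [Fin.forall_fin_two, hB.inter hL, hB.diff hL]
  · simp [Fin.forall_fin_two, (hb measurableSet_Ici).inter hBt, hL.inter hBt]
  · simp [Fin.forall_fin_two, inter_subset_left]
  · simp [Fin.forall_fin_two, inter_subset_right]
  rw [Fin.sum_univ_two, ← integral_inter_add_sdiff hL hg,
    setIntegral_congr_fun (hB.inter hL) hg₁, setIntegral_congr_fun (hB.diff hL) hg₂, mul_add]
  refine add_le_add (le_trans ?_ h₁) (le_trans ?_ h₂)
  · gcongr
    exact setIntegral_nonneg (hB.inter hL) fun y hy => pow_nonneg (sub_nonneg.2 hy.2) k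
  · gcongr
    exact setIntegral_nonneg (hB.diff hL) fun y hy =>
      pow_nonneg (by simpa using (lt_of_not_ge hy.2).le) k

end

theorem statement15_general (k : ℕ) :
    ∃ C : ℝ, 0 < C ∧
      ∀ (d : ℕ), 1 ≤ d →
      ∀ (K : EuclideanSpace ℝ (Fin d) → EuclideanSpace ℝ (Fin d) → ℂ)
        (b : EuclideanSpace ℝ (Fin d) → ℝ),
        Measurable (fun z : EuclideanSpace ℝ (Fin d) × EuclideanSpace ℝ (Fin d) => K z.1 z.2) →
        Measurable b →
        LocallyIntegrable (fun x => |b x| ^ k) volume →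
      ∀ (y0 x0 : EuclideanSpace ℝ (Fin d)) (r : ℝ), 0 < r →
        Disjoint (ball y0 r) (ball x0 r) →
        -- absolute integrability of |b(x)−b(y)|^k·|K(x,y)| on B̃ × B
        IntegrableOn
          (fun z : EuclideanSpace ℝ (Fin d) × EuclideanSpace ℝ (Fin d) =>
            |b z.1 - b z.2| ^ k * ‖K z.1 z.2‖)
          ((ball x0 r) ×ˢ (ball y0 r)) volume →
      ∀ (σ : ℂ) (c1 : ℝ), ‖σ‖ = 1 → 0 < c1 →
        (∀ x ∈ ball x0 r, ∀ y ∈ ball y0 r,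
          c1 / (volume (ball y0 r)).toReal ≤ (σ * K x y).re) →
      ∃ Es Ets : Fin 2 → Set (EuclideanSpace ℝ (Fin d)),
        (∀ i, MeasurableSet (Es i)) ∧ (∀ i, MeasurableSet (Ets i)) ∧
        (∀ i, Es i ⊆ ball y0 r) ∧ (∀ i, Ets i ⊆ ball x0 r) ∧
        sInf {t : ℝ | ∃ c : ℝ, t = ∫ y in ball y0 r, |b y - c| ^ k}
          ≤ (C / c1) * ∑ i : Fin 2,
              ‖∫ z in (Ets i) ×ˢ (Es i),
                (((b z.1 - b z.2) ^ k : ℝ) : ℂ) * K z.1 z.2‖ := by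
  refine ⟨2, two_pos, fun d _ K b hK hb hbk y0 x0 r hr _ habs σ c1 hσ hc1 hpos => ?_⟩
  have hV : (volume (ball y0 r)).toReal ≠ 0 :=
    (ENNReal.toReal_pos (measure_ball_pos volume y0 hr).ne' measure_ball_lt_top.ne).ne'
  have hcoef : c1 / (volume (ball y0 r)).toReal * (volume.real (ball x0 r) / 2) = c1 / 2 := by
    rw [Measure.real, Measure.addHaar_ball_center volume x0,
      ← Measure.addHaar_ball_center volume y0]
    field_simp
  obtain ⟨m, Es, Ets, hEs, hEts, hEsB, hEtsB, hest⟩ :=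
    exists_mul_setIntegral_abs_sub_pow_le_sum_norm_commutatorPairing (μ := volume) hb
      measurableSet_ball measurableSet_ball measure_ball_lt_top.ne measure_ball_lt_top.ne
      ((hbk.integrableOn_isCompact (isCompact_closedBall y0 r)).mono_set ball_subset_closedBall)
      ((integrableOn_commutatorKernel_iff hb hK).2 habs) hσ (by positivity) hpos
  refine ⟨Es, Ets, hEs, hEts, hEsB, hEtsB, ?_⟩
  rw [hcoef] at hest
  calc sInf {t : ℝ | ∃ c : ℝ, t = ∫ y in ball y0 r, |b y - c| ^ k}
      ≤ ∫ y in ball y0 r, |b y - m| ^ k :=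
        csInf_le ⟨0, fun _ ⟨c, hc⟩ => hc ▸ integral_nonneg fun _ => by positivity⟩ ⟨m, rfl⟩
    _ ≤ 2 / c1 * ∑ i, ‖commutatorPairing volume k b K (Ets i) (Es i)‖ := by
        rw [div_mul_eq_mul_div, le_div_iff₀ hc1]
        linarith

/-- basic estimate of the median method. If `K` enjoys quantitative
positivity `Re(σK(x,y)) ≥ c₁/|B|` on `B̃ × B` for disjoint equal-radius balls `B`, `B̃`,
then `inf_c ∫_B |b − c|^k ≤ (C_k/c₁)·Σ_{i=1}^2 |⟨1_{Ẽᵢ}, T_b^k 1_{Eᵢ}⟩|` for suitable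
measurable `Eᵢ ⊆ B`, `Ẽᵢ ⊆ B̃`, with `C_k` depending only on `k`. -/
theorem statement15 (k : ℕ) (hk : 1 ≤ k) :
    ∃ C : ℝ, 0 < C ∧
      ∀ (d : ℕ), 1 ≤ d →
      ∀ (K : EuclideanSpace ℝ (Fin d) → EuclideanSpace ℝ (Fin d) → ℂ)
        (b : EuclideanSpace ℝ (Fin d) → ℝ),
        Measurable (fun z : EuclideanSpace ℝ (Fin d) × EuclideanSpace ℝ (Fin d) => K z.1 z.2) →
        Measurable b →
        LocallyIntegrable (fun x => |b x| ^ k) volume →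
      ∀ (y0 x0 : EuclideanSpace ℝ (Fin d)) (r : ℝ), 0 < r →
        Disjoint (ball y0 r) (ball x0 r) →
        -- absolute integrability of |b(x)−b(y)|^k·|K(x,y)| on B̃ × B
        IntegrableOn
          (fun z : EuclideanSpace ℝ (Fin d) × EuclideanSpace ℝ (Fin d) =>
            |b z.1 - b z.2| ^ k * ‖K z.1 z.2‖)
          ((ball x0 r) ×ˢ (ball y0 r)) volume →
      ∀ (σ : ℂ) (c1 : ℝ), ‖σ‖ = 1 → 0 < c1 →
        (∀ x ∈ ball x0 r, ∀ y ∈ ball y0 r,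
          c1 / (volume (ball y0 r)).toReal ≤ (σ * K x y).re) →
      ∃ Es Ets : Fin 2 → Set (EuclideanSpace ℝ (Fin d)),
        (∀ i, MeasurableSet (Es i)) ∧ (∀ i, MeasurableSet (Ets i)) ∧
        (∀ i, Es i ⊆ ball y0 r) ∧ (∀ i, Ets i ⊆ ball x0 r) ∧
        sInf {t : ℝ | ∃ c : ℝ, t = ∫ y in ball y0 r, |b y - c| ^ k}
          ≤ (C / c1) * ∑ i : Fin 2,
              ‖∫ z in (Ets i) ×ˢ (Es i),
                (((b z.1 - b z.2) ^ k : ℝ) : ℂ) * K z.1 z.2‖ :=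
  statement15_general k
end
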